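/- Let (G, B⁻, B⁺, σ, τ) be a tree piece with a witnessing tree decomposition with bags (X_i)_{i ∈ I} of width w. Let S ⊆ V(G) be disjoint from B⁻ ∪ B⁺. For every v ∈ S let (H_v, B⁻_v, B⁺_v, σ_v, τ_v) be a tree piece that is valid for v, with a witnessing tree decomposition of width w_v. Let G′ be obtained from G by placing the piece for v, for every v ∈ S. Then (G′, B⁻, B⁺, σ, τ) is a tree piece admitting a witnessing tree decomposition of width at most max( max_{v ∈ S} w_v, max_{i ∈ I} ( |X_i ∖ S| + Σ_{v ∈ S ∩ X_i} |B⁻_v ∪ B⁺_v| ) − 1 ). -/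

import Mathlib

/-- A finite directed multigraph. -/
structure MultiDigraph where
  V : Type
  E : Type
  [fintV : Fintype V]
  [fintE : Fintype E]
  [decV : DecidableEq V]
  src : E → V
  tgt : E → V

attribute [instance] MultiDigraph.fintV MultiDigraph.fintE MultiDigraph.decV

/-- A piece `(H, B⁻, B⁺, σ, τ)`: a directed multigraph `H`, disjoint boundary
sets `B⁻` and `B⁺`, a list `sig` of heads of the entry arcs (in `B⁻`) and a
list `tau` of tails of the exit arcs (in `B⁺`). -/
structure GraphPiece where
  H : MultiDigraph
  Bm : Finset H.V
  Bp : Finset H.V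
  sig : List H.V
  tau : List H.V
  disj : Disjoint Bm Bp
  sig_mem : ∀ x ∈ sig, x ∈ Bm
  tau_mem : ∀ x ∈ tau, x ∈ Bp

/-- A path decomposition of a directed multigraph, with bags `X 0, …, X r`. -/
def IsPD (G : MultiDigraph) {r : ℕ} (X : Fin (r + 1) → Finset G.V) : Prop :=
  (∀ v, ∃ i, v ∈ X i) ∧
  (∀ e : G.E, ∃ i, G.src e ∈ X i ∧ G.tgt e ∈ X i) ∧
  (∀ (v : G.V) (i j k : Fin (r + 1)), i ≤ j → j ≤ k → v ∈ X i → v ∈ X k → v ∈ X j)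

/-- A witnessing path decomposition of a piece: a path decomposition whose
first bag contains `B⁻` and whose last bag contains `B⁺`. -/
def IsWitPD (P : GraphPiece) {r : ℕ} (X : Fin (r + 1) → Finset P.H.V) : Prop :=
  IsPD P.H X ∧ P.Bm ⊆ X 0 ∧ P.Bp ⊆ X (Fin.last r)

/-- The placement of valid pieces `P v` for all `v ∈ S` in the multigraph `G`,
under the bijections `ein`/`eout` between arcs into (resp. out of) `v` and the
entries of `(P v).sig` (resp. `(P v).tau`).  The vertex `v` is removed, a copy
of `(P v).H` is added, and each arc is redirected to the corresponding entry
vertex. -/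
def placeAll (G : MultiDigraph) (S : Finset G.V) (P : G.V → GraphPiece)
    (ein : ∀ v ∈ S, {e : G.E // G.tgt e = v} ≃ Fin ((P v).sig.length))
    (eout : ∀ v ∈ S, {e : G.E // G.src e = v} ≃ Fin ((P v).tau.length)) :
    MultiDigraph :=
  MultiDigraph.mk
    ({x : G.V // x ∉ S} ⊕ (Σ v : {x : G.V // x ∈ S}, (P v.1).H.V))
    (G.E ⊕ (Σ v : {x : G.V // x ∈ S}, (P v.1).H.E))
    (fun e => match e with
      | Sum.inl e =>
          if h : G.src e ∈ S then
            Sum.inr ⟨⟨G.src e, h⟩, (P (G.src e)).tau.get ((eout (G.src e) h) ⟨e, rfl⟩)⟩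
          else Sum.inl ⟨G.src e, h⟩
      | Sum.inr x => Sum.inr ⟨x.1, (P x.1.1).H.src x.2⟩)
    (fun e => match e with
      | Sum.inl e =>
          if h : G.tgt e ∈ S then
            Sum.inr ⟨⟨G.tgt e, h⟩, (P (G.tgt e)).sig.get ((ein (G.tgt e) h) ⟨e, rfl⟩)⟩
          else Sum.inl ⟨G.tgt e, h⟩
      | Sum.inr x => Sum.inr ⟨x.1, (P x.1.1).H.tgt x.2⟩)

/-- A tree decomposition of a directed multigraph over the tree `T`:
every vertex is in a bag, both endpoints of every arc share a bag, and for
every vertex the nodes whose bags contain it induce a non-empty connected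
subgraph (hence a subtree when `T` is a tree). -/
def IsTD (G : MultiDigraph) {I : Type} (T : SimpleGraph I)
    (X : I → Finset G.V) : Prop :=
  (∀ v, ∃ i, v ∈ X i) ∧
  (∀ e : G.E, ∃ i, G.src e ∈ X i ∧ G.tgt e ∈ X i) ∧
  (∀ v : G.V, (T.induce {i | v ∈ X i}).Connected)

/-- A witnessing tree decomposition of a tree piece: a tree decomposition over
a tree with a bag containing `B⁻ ∪ B⁺`. -/
def IsWitTD (P : GraphPiece) {I : Type} (T : SimpleGraph I)
    (X : I → Finset P.H.V) : Prop :=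
  IsTD P.H T X ∧ ∃ i, P.Bm ∪ P.Bp ⊆ X i

/-!
Hang the witnessing tree of the piece for each `v ∈ S` from a node of `T` whose bag contains `v`,
joining it by one edge to a node whose bag contains `B⁻_v ∪ B⁺_v`. In the bags of `T`, replace
each `v ∈ S` by `B⁻_v ∪ B⁺_v`: every redirected arc ends in these sets. A boundary vertex of a
piece then occupies a connected set of nodes of `T` and a connected set of nodes of its own tree,
and these two sets meet the two ends of the hanging edge. Since a cycle cannot leave a hung tree
through its single hanging edge and come back, the glued graph is again a tree.
-/

namespace SimpleGraph

variable {V W : Type*} {G : SimpleGraph V} {H : SimpleGraph W}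

theorem Walk.IsCycle.induce {s : Set V} {u : V} {p : G.Walk u u} (hp : p.IsCycle)
    (hs : ∀ x ∈ p.support, x ∈ s) : (p.induce s hs).IsCycle :=
  IsCycle.of_map (f := (Embedding.induce s).toHom) (by rwa [map_induce])

theorem IsAcyclic.not_isCycle_of_support_subset_range (hH : H.IsAcyclic) (f : H ↪g G) {u : V}
    {p : G.Walk u u} (hs : ∀ x ∈ p.support, x ∈ Set.range f) : ¬p.IsCycle := fun hp =>
  f.isoInduceRange.isAcyclic_iff.mp hH _ (hp.induce hs)

/-- The two boundary edges met on the way out of `A` and on the way back are distinct edges of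
the trail. -/
theorem Walk.IsTrail.support_subset_of_boundary_edge_eq {A : Set V} {e : Sym2 V} {u : V}
    {p : G.Walk u u} (hp : p.IsTrail) (hu : u ∈ A)
    (hA : ∀ x y, G.Adj x y → x ∈ A → y ∉ A → s(x, y) = e) : ∀ z ∈ p.support, z ∈ A := by
  classical
  by_contra! ⟨z, hz, hzA⟩
  have hexit : e ∈ (p.takeUntil z hz).edges := by
    obtain ⟨d, hd, hdA, hdA'⟩ := (p.takeUntil z hz).exists_boundary_dart A hu hzA
    rw [← hA _ _ d.adj hdA hdA']
    exact List.mem_map_of_mem hd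
  have hentry : e ∈ (p.dropUntil z hz).edges := by
    obtain ⟨d, hd, hdA, hdA'⟩ := (p.dropUntil z hz).exists_boundary_dart Aᶜ hzA (by simpa)
    rw [← hA _ _ d.adj.symm (not_not.mp hdA') hdA, Sym2.eq_swap]
    exact List.mem_map_of_mem hd
  have hnodup := hp.edges_nodup
  rw [← p.take_spec hz, edges_append] at hnodup
  exact List.disjoint_of_nodup_append hnodup hexit hentry

theorem Connected.induce_image (f : H →g G) {s : Set W} (hs : (H.induce s).Connected) :
    (G.induce (f '' s)).Connected :=
  hs.map (induceHom f (Set.mapsTo_image f s)) <| by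
    rintro ⟨_, a, ha, rfl⟩
    exact ⟨⟨a, ha⟩, rfl⟩

section HangTrees

variable {I K : Type*} (T : SimpleGraph I) {Iv : K → Type*} (Tv : ∀ k, SimpleGraph (Iv k))
  (att : K → I) (root : ∀ k, Iv k)

def hangTrees : SimpleGraph (I ⊕ Σ k, Iv k) where
  Adj
    | .inl i, .inl j => T.Adj i j
    | .inl i, .inr ⟨k, b⟩ => i = att k ∧ b = root k
    | .inr ⟨k, a⟩, .inl j => j = att k ∧ a = root k
    | .inr ⟨k, a⟩, .inr ⟨l, b⟩ => ∃ h : k = l, (Tv l).Adj (h ▸ a) b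
  symm := ⟨by
    rintro (i | ⟨k, a⟩) (j | ⟨l, b⟩) h
    · exact h.symm
    · exact h
    · exact h
    · obtain ⟨rfl, h⟩ := h
      exact ⟨rfl, h.symm⟩⟩
  loopless := ⟨by
    rintro (i | ⟨k, a⟩) h
    · exact T.loopless.irrefl i h
    · obtain ⟨_, h⟩ := h
      exact (Tv k).loopless.irrefl a h⟩

def hangTreesBase : T ↪g hangTrees T Tv att root where
  toFun := Sum.inl
  inj' := Sum.inl_injective
  map_rel_iff' := Iff.rfl

def hangTreesBlock (k : K) : Tv k ↪g hangTrees T Tv att root where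
  toFun a := .inr ⟨k, a⟩
  inj' := Sum.inr_injective.comp sigma_mk_injective
  map_rel_iff' := ⟨fun ⟨_, h⟩ => h, fun h => ⟨rfl, h⟩⟩

variable {T Tv}

theorem hangTrees_adj_root_att (k : K) :
    (hangTrees T Tv att root).Adj (.inr ⟨k, root k⟩) (.inl (att k)) :=
  ⟨rfl, rfl⟩

theorem hangTrees_boundary_edge_eq (k : K) {x y : I ⊕ Σ k, Iv k}
    (h : (hangTrees T Tv att root).Adj x y) (hx : x ∈ Set.range (hangTreesBlock T Tv att root k))
    (hy : y ∉ Set.range (hangTreesBlock T Tv att root k)) :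
    s(x, y) = s(.inr ⟨k, root k⟩, .inl (att k)) := by
  obtain ⟨a, rfl⟩ := hx
  rcases y with j | ⟨l, b⟩
  · obtain ⟨rfl, rfl⟩ := h
    rfl
  · obtain ⟨rfl, -⟩ := h
    exact absurd ⟨b, rfl⟩ hy

theorem hangTrees_connected (hT : T.Connected) (hTv : ∀ k, (Tv k).Connected) :
    (hangTrees T Tv att root).Connected := by
  have hbase (i j : I) : (hangTrees T Tv att root).Reachable (.inl i) (.inl j) :=
    (hT.preconnected i j).map (hangTreesBase T Tv att root).toHom
  have hreach : ∀ x, ∃ i, (hangTrees T Tv att root).Reachable (.inl i) x := by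
    rintro (i | ⟨k, a⟩)
    · exact ⟨i, .rfl⟩
    · refine ⟨att k, (hangTrees_adj_root_att att root k).symm.reachable.trans ?_⟩
      exact ((hTv k).preconnected (root k) a).map (hangTreesBlock T Tv att root k).toHom
  obtain ⟨i₀⟩ := hT.nonempty
  refine (connected_iff_exists_forall_reachable _).mpr ⟨.inl i₀, fun x => ?_⟩
  obtain ⟨i, hi⟩ := hreach x
  exact (hbase i₀ i).trans hi

theorem hangTrees_isAcyclic (hT : T.IsAcyclic) (hTv : ∀ k, (Tv k).IsAcyclic) :
    (hangTrees T Tv att root).IsAcyclic := by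
  classical
  intro u p hp
  by_cases hblock : ∃ k a, .inr ⟨k, a⟩ ∈ p.support
  · obtain ⟨k, a, ha⟩ := hblock
    refine (hTv k).not_isCycle_of_support_subset_range (hangTreesBlock T Tv att root k)
      ?_ (hp.rotate ha)
    exact (hp.rotate ha).isTrail.support_subset_of_boundary_edge_eq ⟨a, rfl⟩
      fun x y h hx hy => hangTrees_boundary_edge_eq att root k h hx hy
  · push Not at hblock
    refine hT.not_isCycle_of_support_subset_range (hangTreesBase T Tv att root) ?_ hp
    rintro (i | ⟨k, a⟩) hx
    · exact ⟨i, rfl⟩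
    · exact absurd hx (hblock k a)

theorem isTree_hangTrees (hT : T.IsTree) (hTv : ∀ k, (Tv k).IsTree) :
    (hangTrees T Tv att root).IsTree :=
  ⟨hangTrees_connected att root hT.connected fun k => (hTv k).connected,
    hangTrees_isAcyclic att root hT.isAcyclic fun k => (hTv k).isAcyclic⟩

end HangTrees

end SimpleGraph

open SimpleGraph

section Placement

open Finset

variable {G : MultiDigraph} {S : Finset G.V} {P : G.V → GraphPiece}

variable (S P) in
def baseBag (Xi : Finset G.V) : Finset ({x // x ∉ S} ⊕ Σ v : {x // x ∈ S}, (P v.1).H.V) :=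
  (Xi.subtype (· ∉ S)).disjSum ((Xi.subtype (· ∈ S)).sigma fun v => (P v.1).Bm ∪ (P v.1).Bp)

theorem inl_mem_baseBag {Xi : Finset G.V} {x : {x // x ∉ S}} :
    .inl x ∈ baseBag S P Xi ↔ x.1 ∈ Xi := by
  simp [baseBag]

theorem inr_mem_baseBag {Xi : Finset G.V} {v : {x // x ∈ S}} {y : (P v.1).H.V} :
    .inr ⟨v, y⟩ ∈ baseBag S P Xi ↔ v.1 ∈ Xi ∧ y ∈ (P v.1).Bm ∪ (P v.1).Bp := by
  simp [baseBag]

theorem card_baseBag (Xi : Finset G.V) :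
    #(baseBag S P Xi) =
      #(Xi.filter (· ∉ S)) + ∑ v ∈ Xi.filter (· ∈ S), #((P v).Bm ∪ (P v).Bp) := by
  rw [baseBag, card_disjSum, card_subtype, card_sigma,
    sum_subtype_eq_sum_filter fun v => #((P v).Bm ∪ (P v).Bp)]

variable (ein : ∀ v ∈ S, {e : G.E // G.tgt e = v} ≃ Fin ((P v).sig.length))
  (eout : ∀ v ∈ S, {e : G.E // G.src e = v} ≃ Fin ((P v).tau.length))

theorem placeAll_src_mem_baseBag {Xi : Finset G.V} {e : G.E} (h : G.src e ∈ Xi) :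
    (placeAll G S P ein eout).src (.inl e) ∈ baseBag S P Xi := by
  dsimp only [placeAll]
  split_ifs
  · exact inr_mem_baseBag.2 ⟨h, mem_union_right _ ((P _).tau_mem _ (List.get_mem _ _))⟩
  · exact inl_mem_baseBag.2 h

theorem placeAll_tgt_mem_baseBag {Xi : Finset G.V} {e : G.E} (h : G.tgt e ∈ Xi) :
    (placeAll G S P ein eout).tgt (.inl e) ∈ baseBag S P Xi := by
  dsimp only [placeAll]
  split_ifs
  · exact inr_mem_baseBag.2 ⟨h, mem_union_left _ ((P _).sig_mem _ (List.get_mem _ _))⟩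
  · exact inl_mem_baseBag.2 h

variable {I : Type} {X : I → Finset G.V} {Iv : {x // x ∈ S} → Type}
  {Xv : ∀ v, Iv v → Finset (P v.1).H.V}

variable (X Xv) in
def gluedBags : I ⊕ (Σ v, Iv v) → Finset ({x // x ∉ S} ⊕ Σ v : {x // x ∈ S}, (P v.1).H.V)
  | .inl i => baseBag S P (X i)
  | .inr ⟨v, a⟩ => (Xv v a).map ((Function.Embedding.sigmaMk v).trans Function.Embedding.inr)

theorem setOf_inl_mem_gluedBags (x : {x // x ∉ S}) :
    {j | .inl x ∈ gluedBags X Xv j} = Sum.inl '' {i | x.1 ∈ X i} := by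
  ext (i | ⟨v, a⟩) <;> simp [gluedBags, inl_mem_baseBag]

theorem inr_mem_gluedBags_inr {v w : {x // x ∈ S}} {y : (P v.1).H.V} {a : Iv w} :
    .inr ⟨v, y⟩ ∈ gluedBags X Xv (.inr ⟨w, a⟩) ↔
      ∃ b, y ∈ Xv v b ∧ (⟨v, b⟩ : Σ v, Iv v) = ⟨w, a⟩ := by
  simp only [gluedBags, mem_map, Function.Embedding.trans_apply, Function.Embedding.sigmaMk_apply,
    Function.Embedding.inr_apply, Sum.inr.injEq, Sigma.mk.injEq]
  constructor
  · rintro ⟨z, hz, rfl, hzy⟩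
    cases hzy
    exact ⟨a, hz, rfl, .rfl⟩
  · rintro ⟨b, hb, rfl, hba⟩
    cases hba
    exact ⟨y, hb, rfl, .rfl⟩

theorem setOf_inr_mem_gluedBags_of_mem {v : {x // x ∈ S}} {y : (P v.1).H.V}
    (hy : y ∈ (P v.1).Bm ∪ (P v.1).Bp) :
    {j | .inr ⟨v, y⟩ ∈ gluedBags X Xv j} =
      Sum.inl '' {i | v.1 ∈ X i} ∪ (fun a => .inr ⟨v, a⟩) '' {a | y ∈ Xv v a} := by
  ext (i | ⟨w, a⟩)
  · simp [gluedBags, inr_mem_baseBag, hy]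
  · simp [inr_mem_gluedBags_inr]

theorem setOf_inr_mem_gluedBags_of_notMem {v : {x // x ∈ S}} {y : (P v.1).H.V}
    (hy : y ∉ (P v.1).Bm ∪ (P v.1).Bp) :
    {j | .inr ⟨v, y⟩ ∈ gluedBags X Xv j} = (fun a => .inr ⟨v, a⟩) '' {a | y ∈ Xv v a} := by
  ext (i | ⟨w, a⟩)
  · simp [gluedBags, inr_mem_baseBag, hy]
  · simp [inr_mem_gluedBags_inr]

theorem connected_induce_setOf_mem_gluedBags {T : SimpleGraph I}
    (hX : ∀ x, (T.induce {i | x ∈ X i}).Connected) {Tv : ∀ v, SimpleGraph (Iv v)}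
    (hXv : ∀ v y, ((Tv v).induce {a | y ∈ Xv v a}).Connected)
    {att : {x // x ∈ S} → I} (hatt : ∀ v, v.1 ∈ X (att v)) {root : ∀ v, Iv v}
    (hroot : ∀ v, (P v.1).Bm ∪ (P v.1).Bp ⊆ Xv v (root v))
    (z : {x // x ∉ S} ⊕ Σ v : {x // x ∈ S}, (P v.1).H.V) :
    ((hangTrees T Tv att root).induce {j | z ∈ gluedBags X Xv j}).Connected := by
  rcases z with x | ⟨v, y⟩
  · rw [setOf_inl_mem_gluedBags]
    exact (hX x.1).induce_image (hangTreesBase T Tv att root).toHom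
  · by_cases hy : y ∈ (P v.1).Bm ∪ (P v.1).Bp
    · rw [setOf_inr_mem_gluedBags_of_mem hy]
      exact connected_induce_union
        ((hX v.1).induce_image (hangTreesBase T Tv att root).toHom).preconnected
        ((hXv v y).induce_image (hangTreesBlock T Tv att root v).toHom).preconnected
        ⟨att v, hatt v, rfl⟩ ⟨root v, hroot v hy, rfl⟩ (hangTrees_adj_root_att att root v).symm
    · rw [setOf_inr_mem_gluedBags_of_notMem hy]
      exact (hXv v y).induce_image (hangTreesBlock T Tv att root v).toHom

theorem isTD_placeAll {T : SimpleGraph I} (hX : IsTD G T X) {Tv : ∀ v, SimpleGraph (Iv v)}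
    (hXv : ∀ v, IsTD (P v.1).H (Tv v) (Xv v))
    {att : {x // x ∈ S} → I} (hatt : ∀ v, v.1 ∈ X (att v)) {root : ∀ v, Iv v}
    (hroot : ∀ v, (P v.1).Bm ∪ (P v.1).Bp ⊆ Xv v (root v)) :
    IsTD (placeAll G S P ein eout) (hangTrees T Tv att root) (gluedBags X Xv) := by
  obtain ⟨hXcover, hXarc, hXconn⟩ := hX
  refine ⟨?_, ?_,
    connected_induce_setOf_mem_gluedBags hXconn (fun v => (hXv v).2.2) hatt hroot⟩
  · rintro (x | ⟨v, y⟩)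
    · obtain ⟨i, hi⟩ := hXcover x.1
      exact ⟨.inl i, inl_mem_baseBag.2 hi⟩
    · obtain ⟨a, ha⟩ := (hXv v).1 y
      exact ⟨.inr ⟨v, a⟩, mem_map_of_mem _ ha⟩
  · rintro (e | ⟨v, e⟩)
    · obtain ⟨i, hsrc, htgt⟩ := hXarc e
      exact ⟨.inl i, placeAll_src_mem_baseBag ein eout hsrc,
        placeAll_tgt_mem_baseBag ein eout htgt⟩
    · obtain ⟨a, hsrc, htgt⟩ := (hXv v).2.1 e
      exact ⟨.inr ⟨v, a⟩, mem_map_of_mem _ hsrc, mem_map_of_mem _ htgt⟩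

theorem card_gluedBags_le [Fintype I] {wv : G.V → ℕ} (hXv : ∀ v a, #(Xv v a) ≤ wv v.1 + 1)
    (j : I ⊕ Σ v, Iv v) :
    #(gluedBags X Xv j) ≤
      max (S.sup wv) ((univ.sup fun i =>
        #((X i).filter (· ∉ S)) + ∑ v ∈ (X i).filter (· ∈ S), #((P v).Bm ∪ (P v).Bp)) - 1) + 1 := by
  rcases j with i | ⟨v, a⟩
  · have hi := le_sup (f := fun i =>
      #((X i).filter (· ∉ S)) + ∑ v ∈ (X i).filter (· ∈ S), #((P v).Bm ∪ (P v).Bp)) (mem_univ i)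
    simp only [gluedBags, card_baseBag] at hi ⊢
    omega
  · simp only [gluedBags, card_map]
    have hv := le_sup (f := wv) v.2
    have ha := hXv v a
    omega

end Placement

theorem place_pieces_treewidth (PG : GraphPiece)
    {I : Type} [Fintype I] (T : SimpleGraph I) (hT : T.IsTree)
    (X : I → Finset PG.H.V) (hX : IsWitTD PG T X)
    (S : Finset PG.H.V)
    (P : PG.H.V → GraphPiece)
    (ein : ∀ v ∈ S, {e : PG.H.E // PG.H.tgt e = v} ≃ Fin ((P v).sig.length))
    (eout : ∀ v ∈ S, {e : PG.H.E // PG.H.src e = v} ≃ Fin ((P v).tau.length))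
    (wv : PG.H.V → ℕ)
    (hPv : ∀ v ∈ S, ∃ (I' : Type) (_ : Fintype I') (T' : SimpleGraph I')
      (X' : I' → Finset (P v).H.V),
      T'.IsTree ∧ IsWitTD (P v) T' X' ∧ ∀ i, (X' i).card ≤ wv v + 1) :
    ∃ (I' : Type) (_ : Fintype I') (T' : SimpleGraph I')
      (X' : I' → Finset (placeAll PG.H S P ein eout).V),
      T'.IsTree ∧
      IsTD (placeAll PG.H S P ein eout) T' X' ∧
      (∃ i, (∀ v (h : v ∉ S), v ∈ PG.Bm → Sum.inl ⟨v, h⟩ ∈ X' i) ∧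
            (∀ v (h : v ∉ S), v ∈ PG.Bp → Sum.inl ⟨v, h⟩ ∈ X' i)) ∧
      (∀ i, (X' i).card ≤
        max
          (S.sup wv)
          ((Finset.univ.sup fun i : I =>
            ((X i).filter (· ∉ S)).card +
            (((X i).filter (· ∈ S)).sum fun v =>
              ((P v).Bm ∪ (P v).Bp).card)) - 1) + 1) := by
  obtain ⟨hXT, i₀, hi₀⟩ := hX
  choose Iv _ Tv Xv hTv hXv hXv_card using fun v : S => hPv v.1 v.2
  choose att hatt using fun v : S => hXT.1 v.1
  choose root hroot using fun v : S => (hXv v).2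
  refine ⟨I ⊕ Σ v, Iv v, inferInstance, hangTrees T Tv att root, gluedBags X Xv,
    isTree_hangTrees att root hT hTv, isTD_placeAll ein eout hXT (fun v => (hXv v).1) hatt hroot,
    ⟨.inl i₀, fun v _ hBm => ?_, fun v _ hBp => ?_⟩, card_gluedBags_le hXv_card⟩
  · exact inl_mem_baseBag.2 (hi₀ (Finset.mem_union_left _ hBm))
  · exact inl_mem_baseBag.2 (hi₀ (Finset.mem_union_right _ hBp))
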